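/- Let A be an 𝔽₂-algebra and X a module over a commutative idempotent subring with a map δ¹: X → A ⊗ X satisfying the curved relation (μ₂ ⊗ Id)∘(Id_A ⊗ δ¹)∘δ¹ = ω ⊗ Id_X for a central element ω ∈ A. If C ∈ A is a central element with C² = 0 and the algebra is equipped with a differential d such that dC = ω and d vanishes on the image of the structure constants (d a_{i,j} = 0), then δ̃¹(x) := C ⊗ x + δ¹(x) satisfies the genuine type D structure relation (μ₂⊗Id)∘(Id_A⊗δ̃¹)∘δ̃¹ + (d⊗Id)∘δ̃¹ = 0. -/
import Mathlib


open scoped TensorProduct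

/-- The contraction `(μ₂ ⊗ Id) : A ⊗ (A ⊗ X) → A ⊗ X` given by multiplication in
the first two tensor factors. -/
noncomputable def mulContract (A X : Type) [Ring A] [Algebra (ZMod 2) A]
    [AddCommGroup X] [Module (ZMod 2) X] :
    A ⊗[ZMod 2] (A ⊗[ZMod 2] X) →ₗ[ZMod 2] A ⊗[ZMod 2] X :=
  (TensorProduct.map (LinearMap.mul' (ZMod 2) A) LinearMap.id).comp
    (TensorProduct.assoc (ZMod 2) A A X).symm.toLinearMap

lemma mc_tmul (A X : Type) [Ring A] [Algebra (ZMod 2) A]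
    [AddCommGroup X] [Module (ZMod 2) X] (a b : A) (x : X) :
    mulContract A X (a ⊗ₜ[ZMod 2] (b ⊗ₜ[ZMod 2] x)) = (a * b) ⊗ₜ[ZMod 2] x := by
  simp [mulContract]

/-- Curing curvature by a central square-zero element.  Let `δ¹ : X → A ⊗ X`
satisfy the curved type `D` relation
`(μ₂ ⊗ Id)∘(Id_A ⊗ δ¹)∘δ¹ = ω ⊗ Id_X` for a central element `ω ∈ A`.  If `C ∈ A`
is central with `C² = 0`, and `A` carries a differential `d` (satisfying the
Leibniz rule) with `dC = ω` which vanishes on the structure constants of `δ¹`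
(i.e. `(d ⊗ Id)∘δ¹ = 0`), then `δ̃¹(x) = C ⊗ x + δ¹(x)` satisfies the genuine
type `D` structure relation
`(μ₂ ⊗ Id)∘(Id_A ⊗ δ̃¹)∘δ̃¹ + (d ⊗ Id)∘δ̃¹ = 0`. -/
theorem curved_typeD_to_honest (A X : Type) [Ring A] [Algebra (ZMod 2) A]
    [AddCommGroup X] [Module (ZMod 2) X]
    (δ : X →ₗ[ZMod 2] A ⊗[ZMod 2] X)
    (ω C : A)
    (hωcentral : ∀ a : A, ω * a = a * ω)
    (hCcentral : ∀ a : A, C * a = a * C)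
    (hC2 : C * C = 0)
    (d : A →ₗ[ZMod 2] A)
    (hLeibniz : ∀ a b : A, d (a * b) = d a * b + a * d b)
    (hdC : d C = ω)
    (hcurv : ∀ x : X,
      mulContract A X ((TensorProduct.map LinearMap.id δ) (δ x)) = ω ⊗ₜ[ZMod 2] x)
    (hdδ : ∀ x : X, (TensorProduct.map d LinearMap.id) (δ x) = 0) :
    ∀ x : X,
      mulContract A X
          ((TensorProduct.map LinearMap.id (TensorProduct.mk (ZMod 2) A X C + δ))
            ((TensorProduct.mk (ZMod 2) A X C + δ) x))
        + (TensorProduct.map d LinearMap.id)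
            ((TensorProduct.mk (ZMod 2) A X C + δ) x) = 0 := by
  intro x
  have key : mulContract A X (C ⊗ₜ[ZMod 2] (δ x))
      = mulContract A X ((TensorProduct.map LinearMap.id
          (TensorProduct.mk (ZMod 2) A X C)) (δ x)) := by
    have h : ((mulContract A X).comp
          ((TensorProduct.mk (ZMod 2) A (A ⊗[ZMod 2] X)) C))
        = (mulContract A X).comp
          (TensorProduct.map LinearMap.id (TensorProduct.mk (ZMod 2) A X C)) := by
      apply TensorProduct.ext'
      intro a y
      simp [mc_tmul, hCcentral]
    exact congrFun (congrArg DFunLike.coe h) (δ x)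
  simp only [LinearMap.add_apply, map_add, TensorProduct.mk_apply]
  have h1 : (TensorProduct.map LinearMap.id
      (TensorProduct.mk (ZMod 2) A X C + δ)) (C ⊗ₜ[ZMod 2] x)
      = C ⊗ₜ[ZMod 2] (C ⊗ₜ[ZMod 2] x) + C ⊗ₜ[ZMod 2] (δ x) := by
    simp [TensorProduct.tmul_add]
  have h2 : (TensorProduct.map LinearMap.id
      (TensorProduct.mk (ZMod 2) A X C + δ)) (δ x)
      = (TensorProduct.map LinearMap.id (TensorProduct.mk (ZMod 2) A X C)) (δ x)
        + (TensorProduct.map LinearMap.id δ) (δ x) := by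
    rw [TensorProduct.map_add_right]; simp
  rw [h1, h2]
  simp only [map_add, mc_tmul, hC2, TensorProduct.zero_tmul, hcurv, hdδ, hdC, key]
  have two : ∀ t : A ⊗[ZMod 2] X, t + t = 0 := by
    intro t
    have : ((2 : ZMod 2)) • t = 0 := by
      rw [show (2 : ZMod 2) = 0 by decide, zero_smul]
    rwa [two_smul] at this
  abel_nf
  simp only [TensorProduct.map_tmul, hdC, LinearMap.id_coe, id_eq, zero_add]
  rw [two_smul, two, two, zero_add]
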